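/- Let X₁, X₂, X_c be independent random variables each with density (1/2)e^{-x/2} on (0,∞), let L₁, L₂, L_c, σ² > 0, γ₁, γ₂ ∈ (0,1) with γ₁ + γ₂ = 1, and ε₁, ε₂ > 0 with γ₁/γ₂ > ε₁ and ε₂/γ₂ < ε₁/(γ₁ − ε₁γ₂). Define V₁,₁ = γ₁L₁X₁/(γ₂L₁X₁ + 2σ²), V₂,₁ = γ₁L₂X₂/(γ₂L₂X₂ + 2σ²), V₂,₂ = γ₂L₂X₂/(2σ²), W₂ = L_cX_c/(2σ²), and ξ = σ²ε₁/(γ₁ − ε₁γ₂). Then the outage probability of the strong user in bi-directional cooperative NOMA satisfies P{ (V₂,₂ < ε₂ or V₂,₁ < ε₁) and V₁,₁ < ε₁ } + P{ (V₂,₂ < ε₂ or max{V₂,₁, W₂} < ε₁) and V₁,₁ > ε₁ } = (1 − e^{−ξ/L₂}) − e^{−σ²ε₁/L_c − ξ/L₁}·(e^{−σ²ε₂/(γ₂L₂)} − e^{−ξ/L₂}). -/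

import Mathlib

open Real MeasureTheory Set

/-- Joint density of three independent exponential(mean 2) random variables. -/
noncomputable def dens3 (p : ℝ × ℝ × ℝ) : ℝ :=
  ((1/2) * Real.exp (-p.1/2)) * ((1/2) * Real.exp (-p.2.1/2)) * ((1/2) * Real.exp (-p.2.2/2))

/-!
Each SINR in the two events is monotone in a single channel gain, so on positive gains every
condition `V < ε` says that the gain lies below a threshold (`2ξ/L₁`, `2ξ/L₂`, `2σ²ε₂/(γ₂L₂)` or
`2σ²ε₁/L_c`). Since `ε₂/γ₂ < ε₁/(γ₁ - ε₁γ₂)`, failing to decode `s₂` implies failing SIC, so the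
first event is a box and the second one a union of two disjoint boxes in the positive orthant.
The joint density is a product of exponential densities, so each box has probability a product of
differences `exp (-a/2) - exp (-b/2)`, and adding up gives the closed form.
-/

noncomputable def expDensity (r x : ℝ) : ℝ := r * exp (-(r * x))

lemma integral_expDensity_Ioo (r : ℝ) {a b : ℝ} (hab : a ≤ b) :
    ∫ x in Ioo a b, expDensity r x = exp (-(r * a)) - exp (-(r * b)) := by
  rw [← integral_Ioc_eq_integral_Ioo, ← intervalIntegral.integral_of_le hab,
    intervalIntegral.integral_eq_sub_of_hasDerivAt (f' := expDensity r)
      (fun x _ => ProbabilityTheory.hasDerivAt_neg_exp_mul_exp)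
      ((by unfold expDensity; fun_prop : Continuous (expDensity r)).intervalIntegrable a b)]
  ring

lemma integral_expDensity_Ioi {r : ℝ} (hr : 0 < r) (a : ℝ) :
    ∫ x in Ioi a, expDensity r x = exp (-(r * a)) := by
  simp only [expDensity, integral_const_mul, ← neg_mul, integral_exp_mul_Ioi (neg_neg_of_pos hr)]
  field_simp

lemma integrableOn_expDensity_Ioi {r : ℝ} (hr : 0 < r) (a : ℝ) :
    IntegrableOn (expDensity r) (Ioi a) := by
  have h := (exp_neg_integrableOn_Ioi a hr).const_mul r
  simp only [neg_mul] at h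
  exact h

lemma integrableOn_expDensity_prod {r : ℝ} (hr : 0 < r) {B C : Set ℝ} (hB : B ⊆ Ioi 0)
    (hC : C ⊆ Ioi 0) :
    IntegrableOn (fun q : ℝ × ℝ => expDensity r q.1 * expDensity r q.2) (B ×ˢ C) := by
  rw [IntegrableOn, Measure.volume_eq_prod, ← Measure.prod_restrict]
  exact ((integrableOn_expDensity_Ioi hr 0).mono_set hB).mul_prod
    ((integrableOn_expDensity_Ioi hr 0).mono_set hC)

lemma dens3_eq_expDensity (p : ℝ × ℝ × ℝ) :
    dens3 p = expDensity (1/2) p.1 * (expDensity (1/2) p.2.1 * expDensity (1/2) p.2.2) := by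
  simp only [dens3, expDensity]
  ring_nf

lemma setIntegral_expDensity_prod (r : ℝ) (B C : Set ℝ) :
    ∫ q in B ×ˢ C, expDensity r q.1 * expDensity r q.2
      = (∫ y in B, expDensity r y) * ∫ z in C, expDensity r z := by
  rw [Measure.volume_eq_prod, setIntegral_prod_mul]

lemma setIntegral_dens3_prod (A : Set ℝ) (S : Set (ℝ × ℝ)) :
    ∫ p in A ×ˢ S, dens3 p = (∫ x in A, expDensity (1/2) x) *
      ∫ q in S, expDensity (1/2) q.1 * expDensity (1/2) q.2 := by
  simp_rw [dens3_eq_expDensity]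
  rw [Measure.volume_eq_prod, setIntegral_prod_mul (expDensity (1/2))
    (fun q : ℝ × ℝ => expDensity (1/2) q.1 * expDensity (1/2) q.2)]

lemma sinr_lt_iff {a b c ε t x : ℝ} (hb : 0 ≤ b) (hc : 0 < c) (hx : 0 ≤ x)
    (hd : 0 < a - ε * b) (ht : t * (a - ε * b) = ε * c) :
    a * x / (b * x + c) < ε ↔ x < t := by
  have key : ε * (b * x + c) - a * x = (t - x) * (a - ε * b) := by linear_combination -ht
  rw [div_lt_iff₀ (by positivity), ← sub_pos, key, mul_pos_iff_of_pos_right hd, sub_pos]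

lemma lt_sinr_iff {a b c ε t x : ℝ} (hb : 0 ≤ b) (hc : 0 < c) (hx : 0 ≤ x)
    (hd : 0 < a - ε * b) (ht : t * (a - ε * b) = ε * c) :
    ε < a * x / (b * x + c) ↔ t < x := by
  have key : a * x - ε * (b * x + c) = (x - t) * (a - ε * b) := by linear_combination ht
  rw [lt_div_iff₀ (by positivity), ← sub_pos, key, mul_pos_iff_of_pos_right hd, sub_pos]

lemma mul_div_lt_iff_of_mul_eq {k c ε t x : ℝ} (hk : 0 < k) (hc : 0 < c) (ht : t * k = ε * c) :
    k * x / c < ε ↔ x < t := by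
  rw [div_lt_iff₀ hc, ← ht, mul_comm k x, mul_lt_mul_iff_left₀ hk]

section OutageEvents

variable {V₁₁ V₂₁ V₂₂ W : ℝ → ℝ} {ε₁ ε₂ t₁ t₂ s c : ℝ}

lemma setOf_outage_noCoop_eq (h₁₁ : ∀ x, 0 < x → (V₁₁ x < ε₁ ↔ x < t₁))
    (h₂₁ : ∀ y, 0 < y → (V₂₁ y < ε₁ ↔ y < t₂)) (h₂₂ : ∀ y, 0 < y → (V₂₂ y < ε₂ ↔ y < s))
    (hst : s ≤ t₂) :
    {p : ℝ × ℝ × ℝ | 0 < p.1 ∧ 0 < p.2.1 ∧ 0 < p.2.2 ∧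
        (V₂₂ p.2.1 < ε₂ ∨ V₂₁ p.2.1 < ε₁) ∧ V₁₁ p.1 < ε₁}
      = Ioo 0 t₁ ×ˢ (Ioo 0 t₂ ×ˢ Ioi 0) := by
  ext ⟨x, y, z⟩
  simp only [mem_ofPred_eq, mem_prod, mem_Ioo, mem_Ioi]
  constructor
  · rintro ⟨hx, hy, hz, hown | hsic, hcoop⟩
    · exact ⟨⟨hx, (h₁₁ x hx).1 hcoop⟩, ⟨hy, ((h₂₂ y hy).1 hown).trans_le hst⟩, hz⟩
    · exact ⟨⟨hx, (h₁₁ x hx).1 hcoop⟩, ⟨hy, (h₂₁ y hy).1 hsic⟩, hz⟩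
  · rintro ⟨⟨hx, hxt⟩, ⟨hy, hyt⟩, hz⟩
    exact ⟨hx, hy, hz, Or.inr ((h₂₁ y hy).2 hyt), (h₁₁ x hx).2 hxt⟩

lemma setOf_outage_coop_eq (h₁₁ : ∀ x, 0 < x → (ε₁ < V₁₁ x ↔ t₁ < x))
    (h₂₁ : ∀ y, 0 < y → (V₂₁ y < ε₁ ↔ y < t₂)) (h₂₂ : ∀ y, 0 < y → (V₂₂ y < ε₂ ↔ y < s))
    (hW : ∀ z, 0 < z → (W z < ε₁ ↔ z < c)) (ht₁ : 0 ≤ t₁) (hs : 0 < s) :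
    {p : ℝ × ℝ × ℝ | 0 < p.1 ∧ 0 < p.2.1 ∧ 0 < p.2.2 ∧
        (V₂₂ p.2.1 < ε₂ ∨ max (V₂₁ p.2.1) (W p.2.2) < ε₁) ∧ ε₁ < V₁₁ p.1}
      = Ioi t₁ ×ˢ (Ioo 0 s ×ˢ Ioi 0 ∪ Ico s t₂ ×ˢ Ioo 0 c) := by
  ext ⟨x, y, z⟩
  simp only [mem_ofPred_eq, mem_prod, mem_union, mem_Ioo, mem_Ico, mem_Ioi, max_lt_iff]
  constructor
  · rintro ⟨hx, hy, hz, hown | ⟨hsic, hrelay⟩, hcoop⟩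
    · exact ⟨(h₁₁ x hx).1 hcoop, .inl ⟨⟨hy, (h₂₂ y hy).1 hown⟩, hz⟩⟩
    · refine ⟨(h₁₁ x hx).1 hcoop, ?_⟩
      by_cases hys : y < s
      · exact .inl ⟨⟨hy, hys⟩, hz⟩
      · exact .inr ⟨⟨not_lt.1 hys, (h₂₁ y hy).1 hsic⟩, hz, (hW z hz).1 hrelay⟩
  · have hx : ∀ {x}, t₁ < x → 0 < x := ht₁.trans_lt
    rintro ⟨hxt, ⟨⟨hy, hys⟩, hz⟩ | ⟨⟨hsy, hyt⟩, hz, hzc⟩⟩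
    · exact ⟨hx hxt, hy, hz, .inl ((h₂₂ y hy).2 hys), (h₁₁ x (hx hxt)).2 hxt⟩
    · have hy := hs.trans_le hsy
      exact ⟨hx hxt, hy, hz, .inr ⟨(h₂₁ y hy).2 hyt, (hW z hz).2 hzc⟩, (h₁₁ x (hx hxt)).2 hxt⟩

lemma integral_outage_noCoop (h₁₁ : ∀ x, 0 < x → (V₁₁ x < ε₁ ↔ x < t₁))
    (h₂₁ : ∀ y, 0 < y → (V₂₁ y < ε₁ ↔ y < t₂)) (h₂₂ : ∀ y, 0 < y → (V₂₂ y < ε₂ ↔ y < s))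
    (hst : s ≤ t₂) (ht₁ : 0 ≤ t₁) (ht₂ : 0 ≤ t₂) :
    ∫ p in {p : ℝ × ℝ × ℝ | 0 < p.1 ∧ 0 < p.2.1 ∧ 0 < p.2.2 ∧
        (V₂₂ p.2.1 < ε₂ ∨ V₂₁ p.2.1 < ε₁) ∧ V₁₁ p.1 < ε₁}, dens3 p
      = (1 - exp (-(t₁ / 2))) * (1 - exp (-(t₂ / 2))) := by
  rw [setOf_outage_noCoop_eq h₁₁ h₂₁ h₂₂ hst, setIntegral_dens3_prod, setIntegral_expDensity_prod,
    integral_expDensity_Ioo _ ht₁, integral_expDensity_Ioo _ ht₂,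
    integral_expDensity_Ioi (by norm_num)]
  simp only [one_div_mul_eq_div, mul_zero, neg_zero, exp_zero, mul_one]

lemma integral_outage_coop (h₁₁ : ∀ x, 0 < x → (ε₁ < V₁₁ x ↔ t₁ < x))
    (h₂₁ : ∀ y, 0 < y → (V₂₁ y < ε₁ ↔ y < t₂)) (h₂₂ : ∀ y, 0 < y → (V₂₂ y < ε₂ ↔ y < s))
    (hW : ∀ z, 0 < z → (W z < ε₁ ↔ z < c)) (ht₁ : 0 ≤ t₁) (hs : 0 < s) (hst : s ≤ t₂)
    (hc : 0 ≤ c) :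
    ∫ p in {p : ℝ × ℝ × ℝ | 0 < p.1 ∧ 0 < p.2.1 ∧ 0 < p.2.2 ∧
        (V₂₂ p.2.1 < ε₂ ∨ max (V₂₁ p.2.1) (W p.2.2) < ε₁) ∧ ε₁ < V₁₁ p.1}, dens3 p
      = exp (-(t₁ / 2)) * ((1 - exp (-(s / 2)))
          + (exp (-(s / 2)) - exp (-(t₂ / 2))) * (1 - exp (-(c / 2)))) := by
  have hdisj : Disjoint (Ioo 0 s ×ˢ Ioi (0 : ℝ)) (Ico s t₂ ×ˢ Ioo 0 c) :=
    disjoint_prod.2 <| .inl <|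
      (Iio_disjoint_Ici le_rfl).mono Ioo_subset_Iio_self Ico_subset_Ici_self
  rw [setOf_outage_coop_eq h₁₁ h₂₁ h₂₂ hW ht₁ hs, setIntegral_dens3_prod,
    setIntegral_union hdisj (measurableSet_Ico.prod measurableSet_Ioo)
      (integrableOn_expDensity_prod (by norm_num) Ioo_subset_Ioi_self subset_rfl)
      (integrableOn_expDensity_prod (by norm_num) (fun y hy => hs.trans_le hy.1)
        Ioo_subset_Ioi_self),
    setIntegral_expDensity_prod, setIntegral_expDensity_prod, integral_Ico_eq_integral_Ioo,
    integral_expDensity_Ioi (by norm_num), integral_expDensity_Ioo _ hs.le,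
    integral_expDensity_Ioi (by norm_num), integral_expDensity_Ioo _ hst,
    integral_expDensity_Ioo _ hc]
  simp only [one_div_mul_eq_div, mul_zero, neg_zero, exp_zero, mul_one]

end OutageEvents

theorem stmt19_general (L1 L2 Lc σ2 γ1 γ2 ε1 ε2 : ℝ) (hL1 : 0 < L1) (hL2 : 0 < L2) (hLc : 0 < Lc)
    (hσ : 0 < σ2) (hγ2 : γ2 ∈ Set.Ioo (0:ℝ) 1)
    (hε1 : 0 < ε1) (hε2 : 0 < ε2)
    (hth : ε1 < γ1 / γ2) (hth2 : ε2 / γ2 < ε1 / (γ1 - ε1 * γ2)) :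
    (∫ p in {p : ℝ × ℝ × ℝ | 0 < p.1 ∧ 0 < p.2.1 ∧ 0 < p.2.2 ∧
        (γ2 * L2 * p.2.1 / (2 * σ2) < ε2 ∨
          γ1 * L2 * p.2.1 / (γ2 * L2 * p.2.1 + 2 * σ2) < ε1) ∧
        γ1 * L1 * p.1 / (γ2 * L1 * p.1 + 2 * σ2) < ε1}, dens3 p)
    + (∫ p in {p : ℝ × ℝ × ℝ | 0 < p.1 ∧ 0 < p.2.1 ∧ 0 < p.2.2 ∧
        (γ2 * L2 * p.2.1 / (2 * σ2) < ε2 ∨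
          max (γ1 * L2 * p.2.1 / (γ2 * L2 * p.2.1 + 2 * σ2)) (Lc * p.2.2 / (2 * σ2)) < ε1) ∧
        ε1 < γ1 * L1 * p.1 / (γ2 * L1 * p.1 + 2 * σ2)}, dens3 p)
    = (1 - Real.exp (-(σ2 * ε1 / (γ1 - ε1 * γ2)) / L2))
      - Real.exp (-(σ2 * ε1) / Lc - (σ2 * ε1 / (γ1 - ε1 * γ2)) / L1) *
        (Real.exp (-(σ2 * ε2) / (γ2 * L2)) - Real.exp (-(σ2 * ε1 / (γ1 - ε1 * γ2)) / L2)) := by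
  have hγ2pos := hγ2.1
  have hd : 0 < γ1 - ε1 * γ2 := by rw [lt_div_iff₀ hγ2pos] at hth; linarith
  set ξ := σ2 * ε1 / (γ1 - ε1 * γ2) with hξ_def
  have hdL : ∀ {L}, 0 < L → 0 < γ1 * L - ε1 * (γ2 * L) := fun hL => by linarith [mul_pos hd hL]
  have hξL : ∀ {L}, 0 < L → 2 * (ξ / L) * (γ1 * L - ε1 * (γ2 * L)) = ε1 * (2 * σ2) := by
    intro L hL; rw [hξ_def]; field_simp
  have hV₁₁ (x : ℝ) (hx : 0 < x) :=
    sinr_lt_iff (by positivity) (by positivity) hx.le (hdL hL1) (hξL hL1)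
  have hV₁₁' (x : ℝ) (hx : 0 < x) :=
    lt_sinr_iff (by positivity) (by positivity) hx.le (hdL hL1) (hξL hL1)
  have hV₂₁ (y : ℝ) (hy : 0 < y) :=
    sinr_lt_iff (by positivity) (by positivity) hy.le (hdL hL2) (hξL hL2)
  have hV₂₂ : ∀ y, 0 < y → (γ2 * L2 * y / (2 * σ2) < ε2 ↔ y < 2 * (σ2 * ε2 / (γ2 * L2))) :=
    fun _ _ => mul_div_lt_iff_of_mul_eq (by positivity) (by positivity) (by field_simp)
  have hW : ∀ z, 0 < z → (Lc * z / (2 * σ2) < ε1 ↔ z < 2 * (σ2 * ε1 / Lc)) :=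
    fun _ _ => mul_div_lt_iff_of_mul_eq hLc (by positivity) (by field_simp)
  have hst : 2 * (σ2 * ε2 / (γ2 * L2)) ≤ 2 * (ξ / L2) := by
    rw [hξ_def, mul_div_assoc σ2 ε1, show σ2 * ε2 / (γ2 * L2) = σ2 * (ε2 / γ2) / L2 by ring]
    gcongr
  rw [integral_outage_noCoop hV₁₁ hV₂₁ hV₂₂ hst (by positivity) (by positivity),
    integral_outage_coop hV₁₁' hV₂₁ hV₂₂ hW (by positivity) (by positivity) hst (by positivity)]
  simp only [mul_div_cancel_left₀ _ (two_ne_zero' ℝ), neg_div]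
  rw [sub_eq_add_neg (-(σ2 * ε1 / Lc)), exp_add]
  ring

theorem stmt19 (L1 L2 Lc σ2 γ1 γ2 ε1 ε2 : ℝ) (hL1 : 0 < L1) (hL2 : 0 < L2) (hLc : 0 < Lc)
    (hσ : 0 < σ2) (hγ1 : γ1 ∈ Set.Ioo (0:ℝ) 1) (hγ2 : γ2 ∈ Set.Ioo (0:ℝ) 1)
    (hsum : γ1 + γ2 = 1) (hε1 : 0 < ε1) (hε2 : 0 < ε2)
    (hth : ε1 < γ1 / γ2) (hth2 : ε2 / γ2 < ε1 / (γ1 - ε1 * γ2)) :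
    (∫ p in {p : ℝ × ℝ × ℝ | 0 < p.1 ∧ 0 < p.2.1 ∧ 0 < p.2.2 ∧
        (γ2 * L2 * p.2.1 / (2 * σ2) < ε2 ∨
          γ1 * L2 * p.2.1 / (γ2 * L2 * p.2.1 + 2 * σ2) < ε1) ∧
        γ1 * L1 * p.1 / (γ2 * L1 * p.1 + 2 * σ2) < ε1}, dens3 p)
    + (∫ p in {p : ℝ × ℝ × ℝ | 0 < p.1 ∧ 0 < p.2.1 ∧ 0 < p.2.2 ∧
        (γ2 * L2 * p.2.1 / (2 * σ2) < ε2 ∨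
          max (γ1 * L2 * p.2.1 / (γ2 * L2 * p.2.1 + 2 * σ2)) (Lc * p.2.2 / (2 * σ2)) < ε1) ∧
        ε1 < γ1 * L1 * p.1 / (γ2 * L1 * p.1 + 2 * σ2)}, dens3 p)
    = (1 - Real.exp (-(σ2 * ε1 / (γ1 - ε1 * γ2)) / L2))
      - Real.exp (-(σ2 * ε1) / Lc - (σ2 * ε1 / (γ1 - ε1 * γ2)) / L1) *
        (Real.exp (-(σ2 * ε2) / (γ2 * L2)) - Real.exp (-(σ2 * ε1 / (γ1 - ε1 * γ2)) / L2)) :=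
  stmt19_general L1 L2 Lc σ2 γ1 γ2 ε1 ε2 hL1 hL2 hLc hσ hγ2 hε1 hε2 hth hth2
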